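/- If A ∈ Mat₃(L) satisfies A^g = A_g⁻¹·A·A_g and has first column (a, b, c), then the product P(A) of all nine entries of A equals ξ³ · N_{L/k}(a·b·c), where N_{L/k}(x) = x·g(x)·g²(x); in particular P(A) is fixed by g and hence lies in (the image of) k. -/

import Mathlib

/-!
Conjugating by `A_g` shifts the rows and columns of `A` cyclically, up to factors `ξ`, so the
relation `A^g = A_g⁻¹ A A_g` determines every entry of `A` from its first column: the columns
are `(a, b, c)`, `(ξ g(c), g(a), g(b))` and `(ξ g²(b), ξ g²(c), g²(a))`. Multiplying gives
`P(A) = ξ³ · N(abc)`, and for a cyclic Galois extension with generator `g` the product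
`x g(x) g²(x)` of the conjugates is the image of the field norm, which lies in `k`.
-/

open Matrix Finset

section CyclicShift

variable {R : Type*} [CommRing R]

abbrev cyclicShift (e : R) : Matrix (Fin 3) (Fin 3) R := !![0, 0, e; 1, 0, 0; 0, 1, 0]

theorem det_cyclicShift (e : R) : (cyclicShift e).det = e := by
  simp [det_fin_three]

theorem entries_of_cyclicShift_mul_eq {e : R} {A B : Matrix (Fin 3) (Fin 3) R}
    (h : cyclicShift e * B = A * cyclicShift e) :
    A 1 1 = B 0 0 ∧ A 2 1 = B 1 0 ∧ A 0 1 = e * B 2 0 ∧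
      A 1 2 = B 0 1 ∧ A 2 2 = B 1 1 ∧ A 0 2 = e * B 2 1 := by
  have entry i j : (cyclicShift e * B) i j = (A * cyclicShift e) i j := by rw [h]
  have h00 := entry 0 0; have h01 := entry 0 1; have h10 := entry 1 0
  have h11 := entry 1 1; have h20 := entry 2 0; have h21 := entry 2 1
  simp only [cyclicShift, Fin.isValue, mul_apply, of_apply, cons_val', cons_val_fin_one,
    cons_val_zero, Fin.sum_univ_three, zero_mul, cons_val_one, add_zero, Matrix.cons_val, zero_add,
    mul_zero, mul_one, one_mul] at h00 h01 h10 h11 h20 h21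
  exact ⟨h10.symm, h20.symm, h00.symm, h11.symm, h21.symm, h01.symm⟩

theorem prod_entries_of_cyclicShift_mul_map_eq (σ : R →+* R) {e : R} (he : σ e = e)
    {A : Matrix (Fin 3) (Fin 3) R}
    (h : cyclicShift e * A.map σ = A * cyclicShift e) :
    ∏ i, ∏ j, A i j = e ^ 3 *
      ((A 0 0 * A 1 0 * A 2 0) * σ (A 0 0 * A 1 0 * A 2 0) *
        σ (σ (A 0 0 * A 1 0 * A 2 0))) := by
  obtain ⟨h11, h21, h01, h12, h22, h02⟩ := entries_of_cyclicShift_mul_eq h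
  simp only [map_apply] at h11 h21 h01 h12 h22 h02
  rw [h01] at h12
  rw [h11] at h22
  rw [h21] at h02
  simp only [Fin.prod_univ_three, h11, h21, h01, h12, h22, h02, map_mul, he]
  ring

end CyclicShift

theorem algebraMap_norm_eq_prod_range_finrank {k L : Type*} [Field k] [Field L] [Algebra k L]
    [FiniteDimensional k L] [IsGalois k L] {g : L ≃ₐ[k] L}
    (hg : ∀ σ : L ≃ₐ[k] L, σ ∈ Subgroup.zpowers g) (x : L) :
    algebraMap k L (Algebra.norm k x) = ∏ i ∈ range (Module.finrank k L), (g ^ i) x := by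
  classical
  rw [Algebra.norm_eq_prod_automorphisms, ← IsGalois.card_aut_eq_finrank,
    ← IsCyclic.image_range_card hg, prod_image]
  rw [← orderOf_eq_card_of_forall_mem_zpowers hg]
  exact fun i hi j hj => pow_injOn_Iio_orderOf (by simpa using hi) (by simpa using hj)

theorem stmt_2 (k L : Type*) [Field k] [Field L] [Algebra k L] [IsGalois k L]
    (hdeg : Module.finrank k L = 3)
    (g : L ≃ₐ[k] L) (hg : ∀ σ : L ≃ₐ[k] L, σ ∈ Subgroup.zpowers g)
    (ξ : k) (hξ : ξ ≠ 0)
    (A : Matrix (Fin 3) (Fin 3) L)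
    (hA : A.map ⇑g =
        (!![0, 0, algebraMap k L ξ; 1, 0, 0; 0, 1, 0])⁻¹ * A *
          !![0, 0, algebraMap k L ξ; 1, 0, 0; 0, 1, 0])
    (a b c : L) (ha : A 0 0 = a) (hb : A 1 0 = b) (hc : A 2 0 = c) :
    (∏ i : Fin 3, ∏ j : Fin 3, A i j) =
        algebraMap k L ξ ^ 3 * ((a * b * c) * g (a * b * c) * g (g (a * b * c))) ∧
      g (∏ i : Fin 3, ∏ j : Fin 3, A i j) = ∏ i : Fin 3, ∏ j : Fin 3, A i j ∧
      (∏ i : Fin 3, ∏ j : Fin 3, A i j) ∈ Set.range (algebraMap k L) := by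
  have : FiniteDimensional k L := Module.finite_of_finrank_eq_succ hdeg
  have hdet : IsUnit (cyclicShift (algebraMap k L ξ)).det := by
    simpa [det_cyclicShift] using hξ
  have hconj := congrArg (cyclicShift (algebraMap k L ξ) * ·) hA
  simp only [Matrix.mul_assoc, mul_nonsing_inv_cancel_left _ _ hdet] at hconj
  have hP := prod_entries_of_cyclicShift_mul_map_eq (g : L →+* L) (g.commutes ξ) hconj
  rw [ha, hb, hc] at hP
  have hnorm : algebraMap k L (ξ ^ 3 * Algebra.norm k (a * b * c)) =
      ∏ i : Fin 3, ∏ j : Fin 3, A i j := by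
    rw [map_mul, map_pow, algebraMap_norm_eq_prod_range_finrank hg, hdeg, hP]
    simp [prod_range_succ, pow_succ]
  exact ⟨hP, hnorm ▸ g.commutes _, _, hnorm⟩
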